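/- arXiv:1707.07196 — 3 statements merged into one kernel-verified Lean document; each statement's English description precedes it below -/
import Mathlib

section
/- Let V be an N-by-k real matrix with orthonormal columns (N > k), and let R be an N-by-r real matrix (r > k) such that every singular value sigma_i of V^T R satisfies 1 - eps <= sigma_i^2 <= 1 + eps for some 0 < eps < 1. Then the spectral norm of the difference between the Moore-Penrose pseudoinverse and the transpose of V^T R is bounded: ||(V^T R)^+ - (V^T R)^T||_2 <= eps / sqrt(1 - eps). -/
open Matrix

/-- Spectral (operator) norm of a real matrix. -/
noncomputable def specNorm {m n : ℕ} (M : Matrix (Fin m) (Fin n) ℝ) : ℝ :=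
  ‖LinearMap.toContinuousLinearMap (Matrix.toEuclideanLin M)‖

/-- Moore–Penrose pseudoinverse of a full-row-rank matrix: `M⁺ = Mᵀ (M Mᵀ)⁻¹`. -/
noncomputable def pinvFR {k r : ℕ} (M : Matrix (Fin k) (Fin r) ℝ) :
    Matrix (Fin r) (Fin k) ℝ :=
  Mᵀ * (M * Mᵀ)⁻¹

/-!
Write `M = Vᵀ R = P D Qᵀ` with `D = diag d`. Every `dᵢ` is nonzero, and
`M Mᵀ = P D² Pᵀ` has inverse `P D⁻² Pᵀ`, so `M⁺ = Q D⁻¹ Pᵀ` and `M⁺ - Mᵀ = Q (D⁻¹ - D) Pᵀ`.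
As `Q` and `Pᵀ` have orthonormal columns they have spectral norm at most `1`, so the spectral
norm of `M⁺ - Mᵀ` is at most `maxᵢ |dᵢ⁻¹ - dᵢ| = maxᵢ |1 - dᵢ²| / |dᵢ| ≤ ε / √(1 - ε)`.
-/

open scoped Matrix.Norms.L2Operator

lemma specNorm_eq_l2_opNorm {m n : ℕ} (M : Matrix (Fin m) (Fin n) ℝ) : specNorm M = ‖M‖ := rfl

section L2OpNorm

variable {𝕜 m n l : Type*} [RCLike 𝕜] [Fintype m] [Fintype n] [Fintype l] [DecidableEq n]
  [DecidableEq l]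

lemma Matrix.l2_opNorm_one_le : ‖(1 : Matrix n n 𝕜)‖ ≤ 1 := by
  rw [← diagonal_one, l2_opNorm_diagonal]
  exact pi_norm_le_iff_of_nonneg zero_le_one |>.mpr fun _ => norm_one.le

lemma Matrix.l2_opNorm_le_one_of_conjTranspose_mul_self_eq_one {A : Matrix m n 𝕜}
    (hA : Aᴴ * A = 1) : ‖A‖ ≤ 1 := by
  have h : ‖A‖ * ‖A‖ ≤ 1 := l2_opNorm_conjTranspose_mul_self A ▸ hA ▸ l2_opNorm_one_le
  nlinarith [norm_nonneg A]

lemma Matrix.l2_opNorm_mul_diagonal_mul_le {A : Matrix m n 𝕜} {B : Matrix n l 𝕜}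
    (hA : Aᴴ * A = 1) (hB : Bᴴ * B = 1) {v : n → 𝕜} {c : ℝ} (hc : 0 ≤ c)
    (hv : ∀ i, ‖v i‖ ≤ c) : ‖A * diagonal v * B‖ ≤ c := by
  calc ‖A * diagonal v * B‖ ≤ ‖A‖ * ‖diagonal v‖ * ‖B‖ :=
        (l2_opNorm_mul _ _).trans (mul_le_mul_of_nonneg_right (l2_opNorm_mul _ _) (norm_nonneg _))
    _ ≤ 1 * c * 1 := by
        gcongr
        · exact l2_opNorm_le_one_of_conjTranspose_mul_self_eq_one hA
        · exact (l2_opNorm_diagonal v).trans_le ((pi_norm_le_iff_of_nonneg hc).mpr hv)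
        · exact l2_opNorm_le_one_of_conjTranspose_mul_self_eq_one hB
    _ = c := by ring

end L2OpNorm

section DiagonalSandwich

variable {R m n l p q : Type*} [CommSemiring R] [Fintype n] [DecidableEq n]

lemma Matrix.transpose_mul_diagonal_mul (A : Matrix m n R) (d : n → R) (B : Matrix n l R) :
    (A * diagonal d * B)ᵀ = Bᵀ * diagonal d * Aᵀ := by
  simp only [transpose_mul, diagonal_transpose, Matrix.mul_assoc]

lemma Matrix.mul_diagonal_mul_mul_mul_diagonal_mul [Fintype p] (A : Matrix m n R) (a b : n → R)
    {B : Matrix n p R} {C : Matrix p n R} (h : B * C = 1) (D : Matrix n q R) :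
    A * diagonal a * B * (C * diagonal b * D) = A * diagonal (a * b) * D := by
  calc A * diagonal a * B * (C * diagonal b * D) = A * diagonal a * (B * C) * diagonal b * D := by
        simp only [Matrix.mul_assoc]
    _ = A * diagonal (a * b) * D := by
        rw [h, Matrix.mul_one, Matrix.mul_assoc A, diagonal_mul_diagonal]; rfl

end DiagonalSandwich

lemma pinvFR_mul_diagonal_mul {k r : ℕ} {P : Matrix (Fin k) (Fin k) ℝ}
    {Q : Matrix (Fin r) (Fin k) ℝ} (hP : P * Pᵀ = 1) (hQ : Qᵀ * Q = 1) {d : Fin k → ℝ}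
    (hd : ∀ i, d i ≠ 0) :
    pinvFR (P * diagonal d * Qᵀ) = Q * diagonal d⁻¹ * Pᵀ := by
  have hPP : Pᵀ * P = 1 := mul_eq_one_comm.mp hP
  have hd_sq_inv : d * d * (d⁻¹ * d⁻¹) = 1 := by
    ext i; simp only [Pi.mul_apply, Pi.inv_apply, Pi.one_apply]; field_simp [hd i]
  have hd_inv_sq : d * (d⁻¹ * d⁻¹) = d⁻¹ := by
    ext i; simp only [Pi.mul_apply, Pi.inv_apply]; field_simp [hd i]
  have hgram : (P * diagonal d * Qᵀ) * (P * diagonal d * Qᵀ)ᵀ = P * diagonal (d * d) * Pᵀ := by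
    rw [transpose_mul_diagonal_mul, transpose_transpose,
      mul_diagonal_mul_mul_mul_diagonal_mul _ _ _ hQ]
  have hinv : (P * diagonal (d * d) * Pᵀ)⁻¹ = P * diagonal (d⁻¹ * d⁻¹) * Pᵀ := by
    apply inv_eq_right_inv
    rw [mul_diagonal_mul_mul_mul_diagonal_mul _ _ _ hPP, hd_sq_inv]
    simpa using hP
  rw [pinvFR, hgram, hinv, transpose_mul_diagonal_mul, transpose_transpose,
    mul_diagonal_mul_mul_mul_diagonal_mul _ _ _ hPP, hd_inv_sq]

lemma abs_inv_sub_self_le {ε x : ℝ} (hε : ε < 1) (hlo : 1 - ε ≤ x ^ 2) (hhi : x ^ 2 ≤ 1 + ε) :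
    |x⁻¹ - x| ≤ ε / √(1 - ε) := by
  have hx : x ≠ 0 := by rintro rfl; linarith
  have hnum : |1 - x ^ 2| ≤ ε := abs_le.mpr ⟨by linarith, by linarith⟩
  have hden : √(1 - ε) ≤ |x| := Real.sqrt_le_sqrt hlo |>.trans_eq (Real.sqrt_sq_eq_abs x)
  calc |x⁻¹ - x| = |1 - x ^ 2| / |x| := by rw [← abs_div]; congr 1; field_simp
    _ ≤ ε / √(1 - ε) := div_le_div₀ (by linarith) hnum (Real.sqrt_pos.mpr (by linarith)) hden

theorem pinv_sub_transpose_specNorm_le_general (N k r : ℕ) (ε : ℝ)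
    (hε : 0 < ε) (hε1 : ε < 1)
    (V : Matrix (Fin N) (Fin k) ℝ) (R : Matrix (Fin N) (Fin r) ℝ)
    (P : Matrix (Fin k) (Fin k) ℝ) (d : Fin k → ℝ) (Q : Matrix (Fin r) (Fin k) ℝ)
    (hP' : P * Pᵀ = 1) (hQ : Qᵀ * Q = 1)
    (hsvd : Vᵀ * R = P * Matrix.diagonal d * Qᵀ)
    (hd : ∀ i, 1 - ε ≤ (d i)^2 ∧ (d i)^2 ≤ 1 + ε) :
    specNorm (pinvFR (Vᵀ * R) - (Vᵀ * R)ᵀ) ≤ ε / Real.sqrt (1 - ε) := by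
  have hd0 : ∀ i, d i ≠ 0 := fun i h => by nlinarith [(hd i).1, h]
  have hdiff : pinvFR (Vᵀ * R) - (Vᵀ * R)ᵀ = Q * diagonal (d⁻¹ - d) * Pᵀ := by
    rw [hsvd, pinvFR_mul_diagonal_mul hP' hQ hd0, transpose_mul_diagonal_mul, transpose_transpose,
      ← Matrix.sub_mul, ← Matrix.mul_sub, diagonal_sub]
    rfl
  rw [hdiff, specNorm_eq_l2_opNorm]
  exact l2_opNorm_mul_diagonal_mul_le (by simpa using hQ) (by simpa using hP')
    (div_nonneg hε.le (Real.sqrt_nonneg _)) fun i => abs_inv_sub_self_le hε1 (hd i).1 (hd i).2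

/-- if `V` is `N × k` with orthonormal columns (`N > k`) and `R` is `N × r`
(`r > k`) such that every singular value `d i` of `Vᵀ R` (given through an SVD
`Vᵀ R = P (diag d) Qᵀ`) satisfies `1 - ε ≤ (d i)² ≤ 1 + ε` with `0 < ε < 1`, then
`‖(Vᵀ R)⁺ - (Vᵀ R)ᵀ‖₂ ≤ ε / √(1 - ε)`. -/
theorem pinv_sub_transpose_specNorm_le (N k r : ℕ) (hNk : k < N) (hkr : k < r) (ε : ℝ)
    (hε : 0 < ε) (hε1 : ε < 1)
    (V : Matrix (Fin N) (Fin k) ℝ) (R : Matrix (Fin N) (Fin r) ℝ)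
    (P : Matrix (Fin k) (Fin k) ℝ) (d : Fin k → ℝ) (Q : Matrix (Fin r) (Fin k) ℝ)
    (hV : Vᵀ * V = 1)
    (hP : Pᵀ * P = 1) (hP' : P * Pᵀ = 1) (hQ : Qᵀ * Q = 1)
    (hsvd : Vᵀ * R = P * Matrix.diagonal d * Qᵀ)
    (hd : ∀ i, 1 - ε ≤ (d i)^2 ∧ (d i)^2 ≤ 1 + ε) :
    specNorm (pinvFR (Vᵀ * R) - (Vᵀ * R)ᵀ) ≤ ε / Real.sqrt (1 - ε) :=
  pinv_sub_transpose_specNorm_le_general N k r ε hε hε1 V R P d Q hP' hQ hsvd hd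
end

section
/- Let X be a D-by-N real matrix, lambda > 0, and Z* = lambda (lambda X^T X + I)^{-1} X^T X. Then Z* minimizes the LSR objective Z -> (1/2)||Z||_F^2 + (lambda/2)||X - X Z||_F^2 over all N-by-N real matrices Z. -/
/-! With `M = Xᵀ X` and `A = λ M + 1`, twice the objective is the quadratic
`tr (Zᵀ A Z) - 2 tr (Zᵀ (λ M)) + λ tr M`. As `A` is symmetric and `A Z* = λ M`, completing the
square turns it into `tr ((Z - Z*)ᵀ A (Z - Z*))` plus a constant, and this term is nonnegative
because `A` is positive definite. -/

open Matrix

noncomputable def frobNorm {m n : ℕ} (M : Matrix (Fin m) (Fin n) ℝ) : ℝ :=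
  Real.sqrt (∑ i, ∑ j, (M i j)^2)

theorem frobNorm_sq {m n : ℕ} (M : Matrix (Fin m) (Fin n) ℝ) :
    frobNorm M ^ 2 = trace (Mᵀ * M) := by
  rw [frobNorm, Real.sq_sqrt (by positivity), Finset.sum_comm]
  simp [trace, mul_apply, sq]

section CompletingTheSquare

variable {n k : Type*} [Fintype n] [Fintype k]

theorem trace_transpose_mul_comm {R : Type*} [CommRing R] (P Q : Matrix n k R) :
    trace (Pᵀ * Q) = trace (Qᵀ * P) := by
  rw [← trace_transpose, transpose_mul, transpose_transpose]

theorem trace_quadratic_eq_completeSquare {R : Type*} [CommRing R] {A : Matrix n n R}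
    (hA : Aᵀ = A) {Z₀ B : Matrix n k R} (hB : A * Z₀ = B) (Z : Matrix n k R) :
    trace (Zᵀ * A * Z) - 2 * trace (Zᵀ * B) =
      trace ((Z - Z₀)ᵀ * A * (Z - Z₀)) - trace (Z₀ᵀ * A * Z₀) := by
  subst hB
  have hcross : trace (Z₀ᵀ * (A * Z)) = trace (Zᵀ * (A * Z₀)) := by
    rw [trace_transpose_mul_comm, transpose_mul, hA, Matrix.mul_assoc]
  simp only [transpose_sub, Matrix.sub_mul, Matrix.mul_sub, trace_sub, Matrix.mul_assoc, hcross]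
  ring

theorem trace_transpose_mul_mul_nonneg {A : Matrix n n ℝ} (hA : A.PosSemidef)
    (W : Matrix n k ℝ) : 0 ≤ trace (Wᵀ * A * W) := by
  simpa [conjTranspose_eq_transpose_of_trivial] using (hA.conjTranspose_mul_mul_same W).trace_nonneg

theorem trace_quadratic_le_of_mul_eq {A : Matrix n n ℝ} (hA : A.PosSemidef)
    {Z₀ B : Matrix n k ℝ} (hB : A * Z₀ = B) (Z : Matrix n k ℝ) :
    trace (Z₀ᵀ * A * Z₀) - 2 * trace (Z₀ᵀ * B) ≤ trace (Zᵀ * A * Z) - 2 * trace (Zᵀ * B) := by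
  have hsymm : Aᵀ = A := by simpa [conjTranspose_eq_transpose_of_trivial] using hA.isHermitian.eq
  rw [trace_quadratic_eq_completeSquare hsymm hB, trace_quadratic_eq_completeSquare hsymm hB]
  simpa using trace_transpose_mul_mul_nonneg hA (Z - Z₀)

end CompletingTheSquare

theorem posDef_smul_gram_add_one {m n : Type*} [Fintype m] [Fintype n] [DecidableEq n]
    {lam : ℝ} (hlam : 0 ≤ lam) (X : Matrix m n ℝ) : (lam • (Xᵀ * X) + 1).PosDef := by
  have hgram : (Xᵀ * X).PosSemidef := by
    simpa [conjTranspose_eq_transpose_of_trivial] using posSemidef_conjTranspose_mul_self X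
  exact PosDef.posSemidef_add (hgram.smul hlam) .one

noncomputable def lsrObjective {D N : ℕ} (lam : ℝ) (X : Matrix (Fin D) (Fin N) ℝ)
    (Z : Matrix (Fin N) (Fin N) ℝ) : ℝ :=
  (1/2) * frobNorm Z ^ 2 + (lam/2) * frobNorm (X - X * Z) ^ 2

theorem two_mul_lsrObjective {D N : ℕ} (lam : ℝ) (X : Matrix (Fin D) (Fin N) ℝ)
    (Z : Matrix (Fin N) (Fin N) ℝ) :
    2 * lsrObjective lam X Z =
      trace (Zᵀ * (lam • (Xᵀ * X) + 1) * Z) - 2 * trace (Zᵀ * (lam • (Xᵀ * X)))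
        + lam * trace (Xᵀ * X) := by
  have hcross : trace (Xᵀ * (X * Z)) = trace (Zᵀ * (Xᵀ * X)) := by
    rw [trace_transpose_mul_comm, transpose_mul, Matrix.mul_assoc]
  simp only [lsrObjective, frobNorm_sq, transpose_sub, Matrix.sub_mul, Matrix.mul_sub, trace_sub,
    hcross, Matrix.mul_add, Matrix.add_mul, trace_add, Matrix.mul_smul, Matrix.smul_mul,
    trace_smul, Matrix.mul_one, transpose_mul, Matrix.mul_assoc, smul_eq_mul]
  ring

/-- `Z* = lam (lam Xᵀ X + I)⁻¹ Xᵀ X` minimizes the LSR objective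
`Z ↦ (1/2)‖Z‖_F² + (lam/2)‖X - X Z‖_F²` over all `N × N` real matrices. -/
theorem LSR_closed_form_minimizer (D N : ℕ) (lam : ℝ) (hlam : 0 < lam)
    (X : Matrix (Fin D) (Fin N) ℝ) :
    let Zstar : Matrix (Fin N) (Fin N) ℝ :=
      lam • ((lam • (Xᵀ * X) + 1)⁻¹ * (Xᵀ * X))
    ∀ Z : Matrix (Fin N) (Fin N) ℝ,
      (1/2) * frobNorm Zstar ^ 2 + (lam/2) * frobNorm (X - X * Zstar) ^ 2 ≤
        (1/2) * frobNorm Z ^ 2 + (lam/2) * frobNorm (X - X * Z) ^ 2 := by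
  intro Zstar Z
  change lsrObjective lam X Zstar ≤ lsrObjective lam X Z
  have hA := posDef_smul_gram_add_one hlam.le X
  have hZstar : (lam • (Xᵀ * X) + 1) * Zstar = lam • (Xᵀ * X) := by
    rw [Matrix.mul_smul, mul_nonsing_inv_cancel_left _ _ ((isUnit_iff_isUnit_det _).mp hA.isUnit)]
  linarith [trace_quadratic_le_of_mul_eq hA.posSemidef hZstar Z,
    two_mul_lsrObjective lam X Z, two_mul_lsrObjective lam X Zstar]
end

section
/- Consider the Sketch-LSR objective f(a) = (lambda/2)||x - B a||_2^2 + ||a||_2^2 for a unit vector x in R^D, B = X R, with X = X_r + Xbar_r a rank-rho matrix with unit-norm columns and R an N-by-n matrix. Suppose: (i) V_r^T R has full row rank with ||(V_r^T R)^+||_2 <= 1/sqrt(1-eps); (ii) ||Xbar_r R||_F <= sqrt(1+eps)||Xbar_r||_F. Let ahat = (V_r^T R)^+ Sigma_r^{-1} U_r^T x. Then ||x - B ahat||_2 <= 1 + sqrt((1+eps)/(1-eps)) * ||Xbar_r||_F and ||ahat||_2 <= 1/sqrt(1-eps), hence f(ahat) <= (lambda/2)(1 + sqrt((1+eps)/(1-eps))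 ||Xbar_r||_F)^2 + 1/(1-eps). -/
open Matrix

/-- Euclidean norm of a real vector. -/
noncomputable def eunorm {n : ℕ} (v : Fin n → ℝ) : ℝ :=
  Real.sqrt (∑ i, (v i)^2)

/-! Split `x - B â` as `(x - U_r U_rᵀ x) - Xbar_r R â`: since `(V_rᵀ R)(V_rᵀ R)⁺ = 1`, the rank-`r`
part `X_r R â` is exactly the projection `U_r U_rᵀ x`. The projection residual has norm at most
`‖x‖ = 1` by Pythagoras, and `‖Xbar_r R â‖ ≤ ‖Xbar_r R‖_F ‖â‖`. Finally `‖â‖ ≤ 1/√(1-ε)` because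
`Σ_r⁻¹` is a contraction (all `σ_i ≥ 1`) and `‖U_rᵀ x‖ ≤ ‖x‖`. -/

section Norms

variable {m n : ℕ}

lemma eunorm_nonneg (v : Fin n → ℝ) : 0 ≤ eunorm v := Real.sqrt_nonneg _

lemma frobNorm_nonneg (M : Matrix (Fin m) (Fin n) ℝ) : 0 ≤ frobNorm M := Real.sqrt_nonneg _

lemma eunorm_eq_norm_toLp (v : Fin n → ℝ) : eunorm v = ‖WithLp.toLp 2 v‖ := by
  simp [EuclideanSpace.norm_eq, eunorm]

lemma eunorm_sq (v : Fin n → ℝ) : eunorm v ^ 2 = v ⬝ᵥ v := by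
  rw [eunorm, Real.sq_sqrt (by positivity)]
  simp only [dotProduct, sq]

lemma eunorm_sub_le (v w : Fin n → ℝ) : eunorm (v - w) ≤ eunorm v + eunorm w := by
  simpa only [eunorm_eq_norm_toLp, WithLp.toLp_sub] using norm_sub_le _ _

lemma eunorm_mulVec_le_specNorm (M : Matrix (Fin m) (Fin n) ℝ) (v : Fin n → ℝ) :
    eunorm (M *ᵥ v) ≤ specNorm M * eunorm v := by
  simpa [eunorm_eq_norm_toLp, specNorm, toLpLin_toLp] using
    (toEuclideanLin M).toContinuousLinearMap.le_opNorm (WithLp.toLp 2 v)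

lemma eunorm_mulVec_le_frobNorm (M : Matrix (Fin m) (Fin n) ℝ) (v : Fin n → ℝ) :
    eunorm (M *ᵥ v) ≤ frobNorm M * eunorm v := by
  rw [eunorm, eunorm, frobNorm, ← Real.sqrt_mul (by positivity), Finset.sum_mul]
  refine Real.sqrt_le_sqrt (Finset.sum_le_sum fun i _ => ?_)
  exact Finset.sum_mul_sq_le_sq_mul_sq Finset.univ (M i) v

end Norms

section Projection

variable {D r : ℕ} {U : Matrix (Fin D) (Fin r) ℝ}

lemma eunorm_sq_eq_sub_projection_add (hU : Uᵀ * U = 1) (x : Fin D → ℝ) :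
    eunorm x ^ 2 = eunorm (x - U *ᵥ (Uᵀ *ᵥ x)) ^ 2 + eunorm (Uᵀ *ᵥ x) ^ 2 := by
  have hcross : x ⬝ᵥ U *ᵥ (Uᵀ *ᵥ x) = (Uᵀ *ᵥ x) ⬝ᵥ (Uᵀ *ᵥ x) := by
    rw [dotProduct_mulVec, ← mulVec_transpose]
  have hproj : U *ᵥ (Uᵀ *ᵥ x) ⬝ᵥ U *ᵥ (Uᵀ *ᵥ x) = (Uᵀ *ᵥ x) ⬝ᵥ (Uᵀ *ᵥ x) := by
    rw [dotProduct_mulVec, ← mulVec_transpose, mulVec_mulVec, hU, one_mulVec]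
  simp only [eunorm_sq, sub_dotProduct, dotProduct_sub, dotProduct_comm _ x, hcross, hproj]
  ring

lemma eunorm_sub_projection_le (hU : Uᵀ * U = 1) (x : Fin D → ℝ) :
    eunorm (x - U *ᵥ (Uᵀ *ᵥ x)) ≤ eunorm x := by
  have := eunorm_sq_eq_sub_projection_add hU x
  nlinarith [eunorm_nonneg x, eunorm_nonneg (x - U *ᵥ (Uᵀ *ᵥ x)), sq_nonneg (eunorm (Uᵀ *ᵥ x))]

lemma eunorm_transpose_mulVec_le (hU : Uᵀ * U = 1) (x : Fin D → ℝ) :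
    eunorm (Uᵀ *ᵥ x) ≤ eunorm x := by
  have := eunorm_sq_eq_sub_projection_add hU x
  nlinarith [eunorm_nonneg x, eunorm_nonneg (Uᵀ *ᵥ x), sq_nonneg (eunorm (x - U *ᵥ (Uᵀ *ᵥ x)))]

end Projection

lemma eunorm_diagonal_inv_mulVec_le {r : ℕ} {d : Fin r → ℝ} (hd : ∀ i, 1 ≤ |d i|)
    (v : Fin r → ℝ) : eunorm ((diagonal d)⁻¹ *ᵥ v) ≤ eunorm v := by
  have hinv : (diagonal d)⁻¹ = diagonal (fun i => (d i)⁻¹) := by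
    refine inv_eq_right_inv ?_
    rw [diagonal_mul_diagonal, ← diagonal_one]
    congr 1 with i
    exact mul_inv_cancel₀ (abs_pos.mp (one_pos.trans_le (hd i)))
  simp only [hinv, eunorm, mulVec_diagonal]
  refine Real.sqrt_le_sqrt (Finset.sum_le_sum fun i _ => ?_)
  rw [mul_pow, ← sq_abs, abs_inv]
  exact mul_le_of_le_one_left (sq_nonneg _)
    (pow_le_one₀ (by positivity) (inv_le_one_of_one_le₀ (hd i)))

lemma mul_pinvFR_of_rank_eq {k r : ℕ} {M : Matrix (Fin k) (Fin r) ℝ} (h : M.rank = k) :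
    M * pinvFR M = 1 := by
  have hsurj : Function.Surjective (M * Mᵀ).mulVec := by
    have : LinearMap.range (M * Mᵀ).mulVecLin = ⊤ := by
      apply Submodule.eq_top_of_finrank_eq
      rw [← rank, rank_self_mul_transpose, h, Module.finrank_fintype_fun_eq_card,
        Fintype.card_fin]
    exact LinearMap.range_eq_top.mp this
  rw [pinvFR, ← Matrix.mul_assoc]
  exact mul_nonsing_inv _ ((isUnit_iff_isUnit_det _).mp (mulVec_surjective_iff_isUnit.mp hsurj))

lemma eunorm_mulVec_diagonal_inv_mulVec_transpose_le {D k r : ℕ} {U : Matrix (Fin D) (Fin k) ℝ}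
    (hU : Uᵀ * U = 1) {d : Fin k → ℝ} (hd : ∀ i, 1 ≤ |d i|) (P : Matrix (Fin r) (Fin k) ℝ)
    (x : Fin D → ℝ) : eunorm (P *ᵥ ((diagonal d)⁻¹ *ᵥ (Uᵀ *ᵥ x))) ≤ specNorm P * eunorm x :=
  (eunorm_mulVec_le_specNorm _ _).trans <|
    mul_le_mul_of_nonneg_left ((eunorm_diagonal_inv_mulVec_le hd _).trans
      (eunorm_transpose_mulVec_le hU x)) (norm_nonneg _)

lemma eunorm_sub_projection_sub_mulVec_le {D r N : ℕ} {U : Matrix (Fin D) (Fin r) ℝ}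
    (hU : Uᵀ * U = 1) (x : Fin D → ℝ) (E : Matrix (Fin D) (Fin N) ℝ) (a : Fin N → ℝ) :
    eunorm (x - U *ᵥ (Uᵀ *ᵥ x) - E *ᵥ a) ≤ eunorm x + frobNorm E * eunorm a :=
  (eunorm_sub_le _ _).trans
    (add_le_add (eunorm_sub_projection_le hU x) (eunorm_mulVec_le_frobNorm E a))

lemma mul_mul_mulVec_pinvFR_mulVec_inv {D k r : ℕ} (U : Matrix (Fin D) (Fin k) ℝ)
    {S : Matrix (Fin k) (Fin k) ℝ} (hS : IsUnit S.det) {M : Matrix (Fin k) (Fin r) ℝ}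
    (hM : M.rank = k) (v : Fin k → ℝ) : (U * S * M) *ᵥ (pinvFR M *ᵥ (S⁻¹ *ᵥ v)) = U *ᵥ v := by
  rw [mulVec_mulVec, mulVec_mulVec, Matrix.mul_assoc (U * S), mul_pinvFR_of_rank_eq hM,
    Matrix.mul_one, Matrix.mul_assoc, mul_nonsing_inv _ hS, Matrix.mul_one]

theorem sketchLSR_objective_bound_general (D N r n : ℕ) (lam ε : ℝ)
    (hlam : 0 < lam) (hε1 : ε < 1)
    (x : Fin D → ℝ) (hx : eunorm x = 1)
    (X Xr Xbar : Matrix (Fin D) (Fin N) ℝ)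
    (Ur : Matrix (Fin D) (Fin r) ℝ) (d : Fin r → ℝ) (Vr : Matrix (Fin N) (Fin r) ℝ)
    (R : Matrix (Fin N) (Fin n) ℝ)
    (hUr : Urᵀ * Ur = 1) (hd : ∀ i, 1 ≤ d i)
    (hXr : Xr = Ur * Matrix.diagonal d * Vrᵀ) (hX : X = Xr + Xbar)
    (hfr : (Vrᵀ * R).rank = r)
    (hpinv : specNorm (pinvFR (Vrᵀ * R)) ≤ 1 / Real.sqrt (1 - ε))
    (hXbarR : frobNorm (Xbar * R) ≤ Real.sqrt (1 + ε) * frobNorm Xbar) :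
    let B := X * R
    let ahat : Fin n → ℝ :=
      (pinvFR (Vrᵀ * R)).mulVec (((Matrix.diagonal d)⁻¹).mulVec (Urᵀ.mulVec x))
    eunorm (x - B.mulVec ahat) ≤
        1 + Real.sqrt ((1 + ε)/(1 - ε)) * frobNorm Xbar ∧
      eunorm ahat ≤ 1 / Real.sqrt (1 - ε) ∧
      (lam/2) * eunorm (x - B.mulVec ahat) ^ 2 + eunorm ahat ^ 2 ≤
        (lam/2) * (1 + Real.sqrt ((1 + ε)/(1 - ε)) * frobNorm Xbar) ^ 2 +
          1/(1 - ε) := by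
  subst hX hXr
  intro B ahat
  have h1ε : 0 < 1 - ε := by linarith
  have hdet : IsUnit (diagonal d).det := by
    rw [det_diagonal, isUnit_iff_ne_zero, Finset.prod_ne_zero_iff]
    exact fun i _ => (one_pos.trans_le (hd i)).ne'
  have hlowRank : (Ur * diagonal d * Vrᵀ * R) *ᵥ ahat = Ur *ᵥ (Urᵀ *ᵥ x) := by
    rw [Matrix.mul_assoc (Ur * diagonal d) Vrᵀ R]
    exact mul_mul_mulVec_pinvFR_mulVec_inv Ur hdet hfr _
  have hsplit : B *ᵥ ahat = Ur *ᵥ (Urᵀ *ᵥ x) + (Xbar * R) *ᵥ ahat := by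
    rw [← hlowRank, ← add_mulVec, ← Matrix.add_mul]
  have hahat : eunorm ahat ≤ 1 / Real.sqrt (1 - ε) := by
    refine (eunorm_mulVec_diagonal_inv_mulVec_transpose_le hUr
      (fun i => (hd i).trans (le_abs_self _)) _ x).trans ?_
    rwa [hx, mul_one]
  have hresid : eunorm (x - B *ᵥ ahat) ≤ 1 + Real.sqrt ((1 + ε) / (1 - ε)) * frobNorm Xbar :=
    calc eunorm (x - B *ᵥ ahat)
        ≤ eunorm x + frobNorm (Xbar * R) * eunorm ahat := by
          rw [hsplit, ← sub_sub]
          exact eunorm_sub_projection_sub_mulVec_le hUr x _ _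
      _ ≤ 1 + Real.sqrt (1 + ε) * frobNorm Xbar * (1 / Real.sqrt (1 - ε)) := by
          rw [hx]
          exact add_le_add_right (mul_le_mul hXbarR hahat (eunorm_nonneg _)
            (mul_nonneg (Real.sqrt_nonneg _) (frobNorm_nonneg _))) _
      _ = 1 + Real.sqrt ((1 + ε) / (1 - ε)) * frobNorm Xbar := by
          rw [Real.sqrt_div' _ h1ε.le]
          ring
  refine ⟨hresid, hahat, add_le_add ?_ ?_⟩
  · exact mul_le_mul_of_nonneg_left (pow_le_pow_left₀ (eunorm_nonneg _) hresid 2) (by positivity)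
  calc eunorm ahat ^ 2 ≤ (1 / Real.sqrt (1 - ε)) ^ 2 := pow_le_pow_left₀ (eunorm_nonneg _) hahat 2
    _ = 1 / (1 - ε) := by rw [div_pow, one_pow, Real.sq_sqrt h1ε.le]

/-- bounds on the Sketch-LSR objective
`f(a) = (lam/2)‖x - B a‖₂² + ‖a‖₂²` at `ahat = (V_rᵀR)⁺ Σ_r⁻¹ U_rᵀ x`, for a unit
vector `x`, `B = X R`, `X = X_r + Xbar_r` with unit-norm columns, `X_r = U_r Σ_r V_rᵀ`,
all top-`r` singular values at least `1`, `V_rᵀ R` of full row rank with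
`‖(V_rᵀR)⁺‖₂ ≤ 1/√(1-ε)`, and `‖Xbar_r R‖_F ≤ √(1+ε) ‖Xbar_r‖_F`. -/
theorem sketchLSR_objective_bound (D N r n : ℕ) (lam ε : ℝ)
    (hlam : 0 < lam) (hε : 0 < ε) (hε1 : ε < 1)
    (x : Fin D → ℝ) (hx : eunorm x = 1)
    (X Xr Xbar : Matrix (Fin D) (Fin N) ℝ)
    (Ur : Matrix (Fin D) (Fin r) ℝ) (d : Fin r → ℝ) (Vr : Matrix (Fin N) (Fin r) ℝ)
    (R : Matrix (Fin N) (Fin n) ℝ)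
    (hcols : ∀ j, eunorm (fun i => X i j) = 1)
    (hUr : Urᵀ * Ur = 1) (hVr : Vrᵀ * Vr = 1) (hd : ∀ i, 1 ≤ d i)
    (hXr : Xr = Ur * Matrix.diagonal d * Vrᵀ) (hX : X = Xr + Xbar)
    (hfr : (Vrᵀ * R).rank = r)
    (hpinv : specNorm (pinvFR (Vrᵀ * R)) ≤ 1 / Real.sqrt (1 - ε))
    (hXbarR : frobNorm (Xbar * R) ≤ Real.sqrt (1 + ε) * frobNorm Xbar) :
    let B := X * R
    let ahat : Fin n → ℝ :=
      (pinvFR (Vrᵀ * R)).mulVec (((Matrix.diagonal d)⁻¹).mulVec (Urᵀ.mulVec x))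
    eunorm (x - B.mulVec ahat) ≤
        1 + Real.sqrt ((1 + ε)/(1 - ε)) * frobNorm Xbar ∧
      eunorm ahat ≤ 1 / Real.sqrt (1 - ε) ∧
      (lam/2) * eunorm (x - B.mulVec ahat) ^ 2 + eunorm ahat ^ 2 ≤
        (lam/2) * (1 + Real.sqrt ((1 + ε)/(1 - ε)) * frobNorm Xbar) ^ 2 +
          1/(1 - ε) :=
  sketchLSR_objective_bound_general D N r n lam ε hlam hε1 x hx X Xr Xbar Ur d Vr R hUr hd hXr hX
    hfr hpinv hXbarR
end
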